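/- arXiv:1901.06131 — 2 statements merged into one kernel-verified Lean document; each statement's English description precedes it below -/
import Mathlib

section
/- Let 0 < μ < 1 and 0 < τ₁ < 1. There exists β > 0 such that τ₁^β ≥ 1/2 and (1-μ)/τ₁^β + μ/(4 τ₁^β) ≤ 1. Moreover, for any such β and any M > 0, r ∈ (0,1], and α ≥ β, one has (1-μ)(4 M r^β − M r^α) + M r^α ≤ 4 M (τ₁ r)^β. -/
/-! Both conditions on `β` amount to `max (1/2) (1 - 3μ/4) ≤ τ₁ ^ β`, and the right side is `< 1`,
so a small `β` works because `τ₁ ^ β → 1` as `β → 0`. For the scale step, `r ^ α ≤ r ^ β` bounds the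
left side by `(4 - 3μ) M r ^ β ≤ 4 τ₁ ^ β M r ^ β`. -/

open Filter Topology

lemma div_add_div_four_le_one_iff {μ t : ℝ} (ht : 0 < t) :
    (1 - μ) / t + μ / (4 * t) ≤ 1 ↔ 1 - 3 * μ / 4 ≤ t := by
  rw [div_add_div _ _ ht.ne' (by positivity), div_le_one (by positivity)]
  constructor <;> intro h <;> nlinarith

lemma Real.exists_pos_lt_rpow {τ c : ℝ} (hτ : 0 < τ) (hc : c < 1) : ∃ β : ℝ, 0 < β ∧ c < τ ^ β := by
  have hlim : ∀ᶠ β in 𝓝 (0 : ℝ), c < τ ^ β :=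
    (Real.continuousAt_const_rpow hτ.ne').eventually_const_lt (by simpa using hc)
  exact ((eventually_mem_nhdsWithin (a := 0) (s := Set.Ioi 0)).and
    (nhdsWithin_le_nhds hlim)).exists

lemma scale_step_le {μ τ β α M r : ℝ} (hμ : 0 ≤ μ) (hτ : 0 ≤ τ) (hτβ : 1 - 3 * μ / 4 ≤ τ ^ β)
    (hM : 0 ≤ M) (hr : 0 < r) (hr1 : r ≤ 1) (hβα : β ≤ α) :
    (1 - μ) * (4 * M * r ^ β - M * r ^ α) + M * r ^ α ≤ 4 * M * (τ * r) ^ β := by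
  have hrα : M * r ^ α ≤ M * r ^ β :=
    mul_le_mul_of_nonneg_left (Real.rpow_le_rpow_of_exponent_ge hr hr1 hβα) hM
  have hMr : 0 ≤ M * r ^ β := mul_nonneg hM (Real.rpow_nonneg hr.le β)
  calc (1 - μ) * (4 * M * r ^ β - M * r ^ α) + M * r ^ α
      = 4 * (1 - μ) * (M * r ^ β) + μ * (M * r ^ α) := by ring
    _ ≤ 4 * (1 - 3 * μ / 4) * (M * r ^ β) := by nlinarith
    _ ≤ 4 * τ ^ β * (M * r ^ β) := by gcongr
    _ = 4 * M * (τ * r) ^ β := by rw [Real.mul_rpow hτ hr.le]; ring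

theorem stmt_3_general (μ τ₁ : ℝ) (hμ0 : 0 < μ) (hτ₁0 : 0 < τ₁) :
    (∃ β : ℝ, 0 < β ∧ τ₁ ^ β ≥ 1 / 2 ∧ (1 - μ) / τ₁ ^ β + μ / (4 * τ₁ ^ β) ≤ 1) ∧
    (∀ β : ℝ, 0 < β → τ₁ ^ β ≥ 1 / 2 → (1 - μ) / τ₁ ^ β + μ / (4 * τ₁ ^ β) ≤ 1 →
      ∀ M r α : ℝ, 0 < M → 0 < r → r ≤ 1 → β ≤ α →
        (1 - μ) * (4 * M * r ^ β - M * r ^ α) + M * r ^ α ≤ 4 * M * (τ₁ * r) ^ β) := by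
  refine ⟨?_, fun β _ _ hβ M r α hM hr hr1 hβα => ?_⟩
  · obtain ⟨β, hβ, hc⟩ :=
      Real.exists_pos_lt_rpow hτ₁0
        (max_lt (by norm_num : (1 / 2 : ℝ) < 1) (by linarith : 1 - 3 * μ / 4 < 1))
    have hτβ := Real.rpow_pos_of_pos hτ₁0 β
    exact ⟨β, hβ, (le_max_left _ _).trans hc.le,
      (div_add_div_four_le_one_iff hτβ).2 ((le_max_right _ _).trans hc.le)⟩
  · have hτβ := (div_add_div_four_le_one_iff (Real.rpow_pos_of_pos hτ₁0 β)).1 hβ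
    exact scale_step_le hμ0.le hτ₁0.le hτβ hM.le hr hr1 hβα

theorem stmt_3 (μ τ₁ : ℝ) (hμ0 : 0 < μ) (hμ1 : μ < 1) (hτ₁0 : 0 < τ₁) (hτ₁1 : τ₁ < 1) :
    (∃ β : ℝ, 0 < β ∧ τ₁ ^ β ≥ 1 / 2 ∧ (1 - μ) / τ₁ ^ β + μ / (4 * τ₁ ^ β) ≤ 1) ∧
    (∀ β : ℝ, 0 < β → τ₁ ^ β ≥ 1 / 2 → (1 - μ) / τ₁ ^ β + μ / (4 * τ₁ ^ β) ≤ 1 →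
      ∀ M r α : ℝ, 0 < M → 0 < r → r ≤ 1 → β ≤ α →
        (1 - μ) * (4 * M * r ^ β - M * r ^ α) + M * r ^ α ≤ 4 * M * (τ₁ * r) ^ β) :=
  stmt_3_general μ τ₁ hμ0 hτ₁0
end

section
/- If a bounded domain Ω ⊂ ℝⁿ satisfies an exterior cone condition at x₀ ∈ ∂Ω — i.e., there is a closed solid cone C with vertex x₀, opening angle θ ∈ (0, π/2), and height h > 0 with C ⊂ Ωᶜ — then Ω satisfies the uniform condition at x₀: there exist 0 < τ₁ < τ₂ < 1, ν ∈ (0,1), and a positive sequence (r_k) with τ₁ r_{k-1} ≤ r_k ≤ τ₂ r_{k-1} such that for each k there is y_k ∈ ∂B(x₀, r_k) with ∂B(x₀, r_k) ∩ B(y_k, ν r_k) ⊂ Ωᶜ. -/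
/-!
The cone meets every sphere `∂B(x₀, r)` with `r ≤ h` in the spherical cap around `x₀ + r • e`
of points `x` with `⟪x - x₀, e⟫ ≥ r cos θ`. On that sphere
`‖x - (x₀ + r • e)‖² = 2 r² - 2 r ⟪x - x₀, e⟫`, so the cap contains the relative ball of radius
`ν r` whenever `ν² ≤ 2 (1 - cos θ)`. Any geometric sequence of radii below `h` then works.
-/

open scoped RealInnerProductSpace

open Metric

section Cone

variable {E : Type*} [NormedAddCommGroup E] [InnerProductSpace ℝ E]

def solidCone (x₀ e : E) (c h : ℝ) : Set E :=
  {x | ‖x - x₀‖ ≤ h ∧ ⟪x - x₀, e⟫ ≥ ‖x - x₀‖ * c}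

lemma norm_sub_add_smul_sq_of_mem_sphere {x₀ e x : E} {r : ℝ} (he : ‖e‖ = 1)
    (hr : 0 ≤ r) (hx : x ∈ sphere x₀ r) :
    ‖x - (x₀ + r • e)‖ ^ 2 = 2 * r ^ 2 - 2 * r * ⟪x - x₀, e⟫ := by
  rw [mem_sphere, dist_eq_norm] at hx
  rw [show x - (x₀ + r • e) = (x - x₀) - r • e by abel, norm_sub_sq_real,
    real_inner_smul_right, norm_smul, he, hx, Real.norm_of_nonneg hr]
  ring

lemma sphere_inter_ball_subset_solidCone {x₀ e : E} {r h c ν : ℝ} (he : ‖e‖ = 1)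
    (hr : 0 < r) (hrh : r ≤ h) (hν : ν ^ 2 ≤ 2 * (1 - c)) :
    sphere x₀ r ∩ ball (x₀ + r • e) (ν * r) ⊆ solidCone x₀ e c h := by
  rintro x ⟨hxs, hxb⟩
  have hxr : ‖x - x₀‖ = r := by rwa [mem_sphere, dist_eq_norm] at hxs
  rw [mem_ball, dist_eq_norm] at hxb
  have hsq : ‖x - (x₀ + r • e)‖ ^ 2 < (ν * r) ^ 2 :=
    pow_lt_pow_left₀ hxb (norm_nonneg _) two_ne_zero
  rw [norm_sub_add_smul_sq_of_mem_sphere he hr.le hxs] at hsq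
  refine ⟨hxr.trans_le hrh, ?_⟩
  rw [hxr]
  nlinarith [mul_le_mul_of_nonneg_right hν (sq_nonneg r)]

end Cone

lemma exists_pos_lt_one_sq_le {a : ℝ} (ha : 0 < a) : ∃ ν : ℝ, 0 < ν ∧ ν < 1 ∧ ν ^ 2 ≤ a := by
  refine ⟨min a (1 / 2), lt_min ha one_half_pos, (min_le_right _ _).trans_lt one_half_lt_one, ?_⟩
  calc min a (1 / 2) ^ 2 ≤ min a (1 / 2) * 1 := by
        rw [sq]
        exact mul_le_mul_of_nonneg_left ((min_le_right _ _).trans one_half_lt_one.le)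
          (le_min ha.le one_half_pos.le)
    _ ≤ a := by rw [mul_one]; exact min_le_left _ _

lemma one_sub_cos_pos {θ : ℝ} (hθ0 : 0 < θ) (hθ : θ < Real.pi / 2) : 0 < 1 - Real.cos θ := by
  have := Real.cos_lt_cos_of_nonneg_of_le_pi_div_two le_rfl hθ.le hθ0
  rw [Real.cos_zero] at this
  linarith

theorem stmt_6_general (n : ℕ) (Ω : Set (EuclideanSpace ℝ (Fin n)))
    (x₀ : EuclideanSpace ℝ (Fin n))
    (e : EuclideanSpace ℝ (Fin n)) (he : ‖e‖ = 1)
    (θ h : ℝ) (hθ0 : 0 < θ) (hθ : θ < Real.pi / 2) (hh : 0 < h)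
    (hcone : {x : EuclideanSpace ℝ (Fin n) |
        ‖x - x₀‖ ≤ h ∧ ⟪x - x₀, e⟫ ≥ ‖x - x₀‖ * Real.cos θ} ⊆ Ωᶜ) :
    ∃ (τ₁ τ₂ ν : ℝ) (r : ℕ → ℝ),
      0 < τ₁ ∧ τ₁ < τ₂ ∧ τ₂ < 1 ∧ 0 < ν ∧ ν < 1 ∧ (∀ k, 0 < r k) ∧
      (∀ k : ℕ, 1 ≤ k → τ₁ * r (k - 1) ≤ r k ∧ r k ≤ τ₂ * r (k - 1)) ∧
      (∀ k : ℕ, ∃ y ∈ Metric.sphere x₀ (r k),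
        Metric.sphere x₀ (r k) ∩ Metric.ball y (ν * r k) ⊆ Ωᶜ) := by
  obtain ⟨ν, hν0, hν1, hν⟩ := exists_pos_lt_one_sq_le (a := 2 * (1 - Real.cos θ))
    (by linarith [one_sub_cos_pos hθ0 hθ])
  have hr0 (k : ℕ) : 0 < h * 2⁻¹ ^ k := by positivity
  have hrh (k : ℕ) : h * 2⁻¹ ^ k ≤ h :=
    mul_le_of_le_one_right hh.le (pow_le_one₀ (by norm_num) (by norm_num))
  refine ⟨1 / 4, 1 / 2, ν, fun k => h * 2⁻¹ ^ k, by norm_num, by norm_num, by norm_num,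
    hν0, hν1, hr0, ?_, fun k => ⟨x₀ + (h * 2⁻¹ ^ k) • e, ?_, ?_⟩⟩
  · rintro (_ | k) hk
    · omega
    · simp only [Nat.add_sub_cancel, pow_succ]
      constructor <;> nlinarith [hr0 k]
  · simp [norm_smul, he, hh.le]
  · exact (sphere_inter_ball_subset_solidCone he (hr0 k) (hrh k) hν).trans hcone

theorem stmt_6 (n : ℕ) (Ω : Set (EuclideanSpace ℝ (Fin n)))
    (hΩopen : IsOpen Ω) (hΩbdd : Bornology.IsBounded Ω)
    (x₀ : EuclideanSpace ℝ (Fin n)) (hx₀ : x₀ ∈ frontier Ω)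
    (e : EuclideanSpace ℝ (Fin n)) (he : ‖e‖ = 1)
    (θ h : ℝ) (hθ0 : 0 < θ) (hθ : θ < Real.pi / 2) (hh : 0 < h)
    (hcone : {x : EuclideanSpace ℝ (Fin n) |
        ‖x - x₀‖ ≤ h ∧ ⟪x - x₀, e⟫ ≥ ‖x - x₀‖ * Real.cos θ} ⊆ Ωᶜ) :
    ∃ (τ₁ τ₂ ν : ℝ) (r : ℕ → ℝ),
      0 < τ₁ ∧ τ₁ < τ₂ ∧ τ₂ < 1 ∧ 0 < ν ∧ ν < 1 ∧ (∀ k, 0 < r k) ∧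
      (∀ k : ℕ, 1 ≤ k → τ₁ * r (k - 1) ≤ r k ∧ r k ≤ τ₂ * r (k - 1)) ∧
      (∀ k : ℕ, ∃ y ∈ Metric.sphere x₀ (r k),
        Metric.sphere x₀ (r k) ∩ Metric.ball y (ν * r k) ⊆ Ωᶜ) :=
  stmt_6_general n Ω x₀ e he θ h hθ0 hθ hh hcone
end
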